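/- (Lemma 3.2, BV bound for the convolution.) Let η > 0 and let w_η ∈ C²([0,η]) satisfy w_η(η) = w_η'(η) = 0, w_η'(x) ≤ 0 ≤ w_η(x) on [0,η], and ∫_0^η w_η(y) dy = 1. Then for every continuous, nonnegative, integrable function ρ : ℝ → ℝ, the function x ↦ (w_η∗ρ)(x) is differentiable and ∫_ℝ |∂_x(w_η∗ρ)(x)| dx ≤ 2 w_η(0) ‖ρ‖_{L¹(ℝ)}. -/

import Mathlib

open MeasureTheory

/-- Non-local convolution: `(w∗ρ)(x) = ∫_x^{x+η} ρ(y) w(y−x) dy`. -/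
noncomputable def nlconv (η : ℝ) (w ρ : ℝ → ℝ) (x : ℝ) : ℝ :=
  ∫ y in x..(x + η), ρ y * w (y - x)

/-!
Integrating by parts against an antiderivative `F` of `ρ` gives
`(w∗ρ)(x) = -w(0) F(x) - ∫₀^η w'(s) F(x+s) ds`, which may be differentiated under the integral
sign because `F' = ρ` is locally bounded: `∂ₓ(w∗ρ)(x) = -w(0) ρ(x) - ∫₀^η w'(s) ρ(x+s) ds`.
Since `w' ≤ 0`, the last integral is at most `∫₀^η (-w'(s)) |ρ(x+s)| ds` in absolute value, and by
Fubini its integral over `x` is `(∫₀^η -w') ‖ρ‖₁ = (w(0) - w(η)) ‖ρ‖₁ = w(0) ‖ρ‖₁`.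
-/

open Set intervalIntegral Convolution

theorem integral_mul_comp_add_eq_convolution (c ρ : ℝ → ℝ) (x : ℝ) :
    ∫ s, c s * ρ (x + s) = ((fun t => c (-t)) ⋆[ContinuousLinearMap.mul ℝ ℝ] ρ) x := by
  rw [convolution_def, ← integral_neg_eq_self]
  simp [sub_eq_add_neg]

theorem integrable_integral_mul_comp_add {c ρ : ℝ → ℝ} (hc : Integrable c) (hρ : Integrable ρ) :
    Integrable fun x => ∫ s, c s * ρ (x + s) := by
  simp only [integral_mul_comp_add_eq_convolution]
  exact hc.comp_neg.integrable_convolution _ hρ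

theorem integral_integral_mul_comp_add {c ρ : ℝ → ℝ} (hc : Integrable c) (hρ : Integrable ρ) :
    ∫ x, ∫ s, c s * ρ (x + s) = (∫ s, c s) * ∫ x, ρ x := by
  simp only [integral_mul_comp_add_eq_convolution]
  rw [integral_convolution _ hc.comp_neg hρ, integral_neg_eq_self]
  rfl

theorem intervalIntegral_mul_comp_add_eq_integral_indicator {a b : ℝ} (hab : a ≤ b)
    (c ρ : ℝ → ℝ) (x : ℝ) :
    ∫ s in a..b, c s * ρ (x + s) = ∫ s, (Ioc a b).indicator c s * ρ (x + s) := by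
  rw [integral_of_le hab, ← MeasureTheory.integral_indicator measurableSet_Ioc]
  simp only [indicator_mul_left]

theorem integrable_intervalIntegral_mul_comp_add {a b : ℝ} {c ρ : ℝ → ℝ} (hab : a ≤ b)
    (hc : IntervalIntegrable c volume a b) (hρ : Integrable ρ) :
    Integrable fun x => ∫ s in a..b, c s * ρ (x + s) := by
  simp only [intervalIntegral_mul_comp_add_eq_integral_indicator hab]
  exact integrable_integral_mul_comp_add
    ((integrable_indicator_iff measurableSet_Ioc).2 hc.1) hρ

theorem integral_intervalIntegral_mul_comp_add {a b : ℝ} {c ρ : ℝ → ℝ} (hab : a ≤ b)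
    (hc : IntervalIntegrable c volume a b) (hρ : Integrable ρ) :
    ∫ x, ∫ s in a..b, c s * ρ (x + s) = (∫ s in a..b, c s) * ∫ x, ρ x := by
  simp only [intervalIntegral_mul_comp_add_eq_integral_indicator hab]
  rw [integral_integral_mul_comp_add ((integrable_indicator_iff measurableSet_Ioc).2 hc.1) hρ,
    MeasureTheory.integral_indicator measurableSet_Ioc, integral_of_le hab]

theorem hasDerivAt_intervalIntegral_mul_comp_add {a b : ℝ} {c F f : ℝ → ℝ}
    (hc : IntervalIntegrable c volume a b) (hF : ∀ x, HasDerivAt F (f x) x) (hf : Continuous f)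
    (x₀ : ℝ) :
    HasDerivAt (fun x => ∫ s in a..b, c s * F (x + s)) (∫ s in a..b, c s * f (x₀ + s)) x₀ := by
  have hFc : Continuous F := continuous_iff_continuousAt.2 fun x => (hF x).continuousAt
  obtain ⟨C, hC⟩ := ((isCompact_closedBall x₀ 1).add isCompact_uIcc).exists_bound_of_continuousOn
    hf.continuousOn
  have hshift {g : ℝ → ℝ} (hg : Continuous g) (x : ℝ) :
      IntervalIntegrable (fun s => c s * g (x + s)) volume a b :=
    hc.mul_continuousOn (by fun_prop)
  refine (hasDerivAt_integral_of_dominated_loc_of_deriv_le (bound := fun s => ‖c s‖ * C)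
    (F := fun x s => c s * F (x + s)) (F' := fun x s => c s * f (x + s))
    (Metric.ball_mem_nhds x₀ zero_lt_one) (.of_forall fun x => (hshift hFc x).def'.1)
    (hshift hFc x₀) (hshift hf x₀).def'.1 ?_ (hc.norm.mul_const C) ?_).2
  · refine .of_forall fun s hs x hx => ?_
    rw [norm_mul]
    exact mul_le_mul_of_nonneg_left
      (hC _ (add_mem_add (Metric.ball_subset_closedBall hx) (uIoc_subset_uIcc hs)))
      (norm_nonneg _)
  · exact .of_forall fun s _ x _ => ((hF (x + s)).comp_add_const x s).const_mul (c s)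

theorem abs_intervalIntegral_mul_le_of_nonpos {a b : ℝ} {g f : ℝ → ℝ} (hab : a ≤ b)
    (hg : ∀ s ∈ Icc a b, g s ≤ 0) :
    |∫ s in a..b, g s * f s| ≤ ∫ s in a..b, -g s * |f s| :=
  (abs_integral_le_integral_abs hab).trans_eq <| integral_congr fun s hs => by
    rw [abs_mul, abs_of_nonpos (hg s (uIcc_of_le hab ▸ hs))]

theorem intervalIntegrable_of_hasDerivAt_of_nonpos {a b : ℝ} {g g' : ℝ → ℝ} (hab : a ≤ b)
    (hg : ∀ s ∈ Icc a b, HasDerivAt g (g' s) s) (hg' : ∀ s ∈ Icc a b, g' s ≤ 0) :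
    IntervalIntegrable g' volume a b := by
  have hIoo : Ioo (min a b) (max a b) ⊆ Icc a b := by
    simpa [hab] using Ioo_subset_Icc_self
  simpa using (intervalIntegrable_deriv_of_nonneg (g := -g) (g' := -g')
    (fun s hs => (hg s (uIcc_of_le hab ▸ hs)).continuousAt.neg.continuousWithinAt)
    (fun s hs => (hg s (hIoo hs)).neg) (fun s hs => neg_nonneg.2 (hg' s (hIoo hs)))).neg

section Kernel

variable {η : ℝ} {w w' ρ : ℝ → ℝ}

theorem nlconv_eq_integral_mul_comp_add (x : ℝ) :
    nlconv η w ρ x = ∫ s in 0..η, w s * ρ (x + s) := by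
  have := integral_comp_add_left (fun y => ρ y * w (y - x)) (a := 0) (b := η) x
  rw [add_zero] at this
  simp only [nlconv, ← this, add_sub_cancel_left, mul_comm]

theorem nlconv_eq_of_hasDerivAt {F : ℝ → ℝ} (hη : 0 ≤ η)
    (hw : ∀ s ∈ Icc 0 η, HasDerivAt w (w' s) s) (hw' : IntervalIntegrable w' volume 0 η)
    (hwη : w η = 0) (hF : ∀ x, HasDerivAt F (ρ x) x) (hρ : Continuous ρ) (x : ℝ) :
    nlconv η w ρ x = -(w 0 * F x) - ∫ s in 0..η, w' s * F (x + s) := by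
  rw [nlconv_eq_integral_mul_comp_add, intervalIntegral.integral_mul_deriv_eq_deriv_mul
    (fun s hs => hw s (uIcc_of_le hη ▸ hs)) (fun s _ => (hF (x + s)).comp_const_add x s) hw'
    ((hρ.comp (continuous_const_add x)).intervalIntegrable 0 η), hwη, add_zero]
  ring

theorem hasDerivAt_nlconv (hη : 0 ≤ η)
    (hw : ∀ s ∈ Icc 0 η, HasDerivAt w (w' s) s) (hw' : IntervalIntegrable w' volume 0 η)
    (hwη : w η = 0) (hρ : Continuous ρ) (x : ℝ) :
    HasDerivAt (nlconv η w ρ) (-(w 0 * ρ x) - ∫ s in 0..η, w' s * ρ (x + s)) x := by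
  have hF (x : ℝ) : HasDerivAt (fun x => ∫ t in 0..x, ρ t) (ρ x) x :=
    (hρ.integral_hasStrictDerivAt 0 x).hasDerivAt
  rw [funext (nlconv_eq_of_hasDerivAt hη hw hw' hwη hF hρ)]
  exact ((hF x).const_mul (w 0)).neg.sub (hasDerivAt_intervalIntegral_mul_comp_add hw' hF hρ x)

theorem abs_deriv_nlconv_le (hη : 0 ≤ η)
    (hw : ∀ s ∈ Icc 0 η, HasDerivAt w (w' s) s) (hwη : w η = 0) (hw0 : 0 ≤ w 0)
    (hw' : ∀ s ∈ Icc 0 η, w' s ≤ 0) (hρ : Continuous ρ) (x : ℝ) :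
    |deriv (nlconv η w ρ) x| ≤ w 0 * |ρ x| + ∫ s in 0..η, -w' s * |ρ (x + s)| := by
  rw [(hasDerivAt_nlconv hη hw (intervalIntegrable_of_hasDerivAt_of_nonpos hη hw hw') hwη hρ
    x).deriv]
  calc _ ≤ |w 0 * ρ x| + |∫ s in 0..η, w' s * ρ (x + s)| := by
        rw [← abs_neg (w 0 * ρ x)]; exact abs_sub _ _
    _ ≤ _ := by
        rw [abs_mul, abs_of_nonneg hw0]
        gcongr
        exact abs_intervalIntegral_mul_le_of_nonpos hη hw'

theorem integral_neg_deriv_eq (hη : 0 ≤ η) (hw : ∀ s ∈ Icc 0 η, HasDerivAt w (w' s) s)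
    (hw' : IntervalIntegrable w' volume 0 η) (hwη : w η = 0) :
    ∫ s in 0..η, -w' s = w 0 := by
  rw [intervalIntegral.integral_neg, integral_eq_sub_of_hasDerivAt
    (fun s hs => hw s (uIcc_of_le hη ▸ hs)) hw', hwη, zero_sub, neg_neg]

end Kernel

theorem nlconv_BV_bound_general
    (η : ℝ) (hη : 0 < η)
    -- the kernel w_η ∈ C²([0,η]) with its derivatives w', w''
    (w w' : ℝ → ℝ)
    (hw : ∀ s ∈ Set.Icc (0 : ℝ) η, HasDerivAt w (w' s) s)
    (hwη : w η = 0)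
    (hwsign : ∀ s ∈ Set.Icc (0 : ℝ) η, w' s ≤ 0 ∧ 0 ≤ w s)
    (ρ : ℝ → ℝ) (hρcont : Continuous ρ)
    (hρint : Integrable ρ) :
    (∀ x : ℝ, DifferentiableAt ℝ (fun z => nlconv η w ρ z) x) ∧
    (∫ x : ℝ, |deriv (fun z => nlconv η w ρ z) x|)
      ≤ 2 * w 0 * ∫ x : ℝ, |ρ x| := by
  have hw'_nonpos (s : ℝ) (hs : s ∈ Icc 0 η) : w' s ≤ 0 := (hwsign s hs).1
  have hw'int := intervalIntegrable_of_hasDerivAt_of_nonpos hη.le hw hw'_nonpos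
  refine ⟨fun x => (hasDerivAt_nlconv hη.le hw hw'int hwη hρcont x).differentiableAt, ?_⟩
  have hbound := abs_deriv_nlconv_le hη.le hw hwη (hwsign 0 ⟨le_rfl, hη.le⟩).2 hw'_nonpos hρcont
  have hJ := integrable_intervalIntegral_mul_comp_add (c := fun s => -w' s) hη.le hw'int.neg
    hρint.abs
  calc ∫ x, |deriv (nlconv η w ρ) x|
      ≤ ∫ x, (w 0 * |ρ x| + ∫ s in 0..η, -w' s * |ρ (x + s)|) :=
        integral_mono_of_nonneg (.of_forall fun x => abs_nonneg _)
          ((hρint.abs.const_mul _).add hJ) (.of_forall hbound)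
    _ = 2 * w 0 * ∫ x, |ρ x| := by
        rw [integral_add (hρint.abs.const_mul _) hJ, MeasureTheory.integral_const_mul,
          integral_intervalIntegral_mul_comp_add (c := fun s => -w' s) hη.le hw'int.neg hρint.abs,
          integral_neg_deriv_eq hη.le hw hw'int hwη]
        ring

/-- Lemma 3.2, BV bound for the convolution. -/
theorem nlconv_BV_bound
    (η : ℝ) (hη : 0 < η)
    -- the kernel w_η ∈ C²([0,η]) with its derivatives w', w''
    (w w' w'' : ℝ → ℝ)
    (hw : ∀ s ∈ Set.Icc (0 : ℝ) η, HasDerivAt w (w' s) s)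
    (hw' : ∀ s ∈ Set.Icc (0 : ℝ) η, HasDerivAt w' (w'' s) s)
    (hw'' : ContinuousOn w'' (Set.Icc (0 : ℝ) η))
    (hwη : w η = 0) (hw'η : w' η = 0)
    (hwsign : ∀ s ∈ Set.Icc (0 : ℝ) η, w' s ≤ 0 ∧ 0 ≤ w s)
    (hwint : ∫ y in (0:ℝ)..η, w y = 1)
    (ρ : ℝ → ℝ) (hρcont : Continuous ρ) (hρnonneg : ∀ x : ℝ, 0 ≤ ρ x)
    (hρint : Integrable ρ) :
    (∀ x : ℝ, DifferentiableAt ℝ (fun z => nlconv η w ρ z) x) ∧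
    (∫ x : ℝ, |deriv (fun z => nlconv η w ρ z) x|)
      ≤ 2 * w 0 * ∫ x : ℝ, |ρ x| :=
  nlconv_BV_bound_general η hη w w' hw hwη hwsign ρ hρcont hρint
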